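/- arXiv:2602.23340 — 2 statements merged into one kernel-verified Lean document; each statement's English description precedes it below -/
import Mathlib

section
/- Let a = { 2n : n ∈ ℕ } and b = { 2n+1 : n ∈ ℕ }, and let X = 𝒫(a) ∪ 𝒫(b) ⊆ 2^ω (identifying subsets of ℕ with their characteristic functions, where 𝒫(c) = {x ⊆ ℕ : x ⊆ c}). Then X has empty interior in the product topology on 2^ω, yet the Raisonnier filter F_X is the Fréchet filter, i.e., F_X consists exactly of the cofinite subsets of ℕ. -/
open Filter Set

/-- The splitting point of two distinct elements of Cantor space. -/
noncomputable def splitPt (x y : ℕ → Bool) : ℕ := sInf {n | x n ≠ y n}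

/-- The set of splitting points of a set `X ⊆ 2^ω`. -/
def splitPts (X : Set (ℕ → Bool)) : Set ℕ :=
  {k | ∃ x ∈ X, ∃ y ∈ X, x ≠ y ∧ splitPt x y = k}

/-- The Raisonnier filter of `X ⊆ 2^ω`: all `a ⊆ ℕ` such that there is a countable
family `(Y n)` covering `X` with `⋃ n, H(Y n) ⊆ a`. -/
def raisonnier (X : Set (ℕ → Bool)) : Set (Set ℕ) :=
  {a | ∃ Y : ℕ → Set (ℕ → Bool), X ⊆ (⋃ n, Y n) ∧ (⋃ n, splitPts (Y n)) ⊆ a}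

/-!
Sequences that are eventually `true` are dense in `2^ω` and avoid both `𝒫(a)` and
`𝒫(b)`, so `X` has empty interior. Every cofinite set is in the Raisonnier filter of any `X`:
cover `2^ω` by the finitely many cylinders of length `N`. Conversely, if `Y n` cover `𝒫(s)` and
`s \ a` is infinite, enumerate it as `e 0, e 1, …` with `e n ∉ H(Y n)`. Then among the elements of
`Y n` with a given prefix below `e n`, all take the same value at `e n`, so a sequence supported in
the range of `e` can be built that, at each `e n`, disagrees with that forced value and therefore
lies in no `Y n`.
-/

theorem interior_eq_empty_of_forall_frequently_ne {α : Type*} [TopologicalSpace α]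
    {X : Set (ℕ → α)} (a : α) (hX : ∀ x ∈ X, ∃ᶠ m in atTop, x m ≠ a) : interior X = ∅ := by
  have hdense : Dense {x : ℕ → α | ∀ᶠ m in atTop, x m = a} := by
    intro x
    refine mem_closure_of_tendsto (f := fun N m => if m < N then x m else a) (b := atTop)
      (tendsto_pi_nhds.2 fun m => tendsto_const_nhds.congr' ?_) (Eventually.of_forall ?_)
    · filter_upwards [eventually_gt_atTop m] with N hN
      simp [hN]
    · intro N
      filter_upwards [eventually_ge_atTop N] with m hm
      simp [not_lt.2 hm]
  refine eq_empty_of_subset_empty (hdense.interior_compl ▸ interior_mono fun x hx hxa => ?_)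
  exact (hX x hx).and_eventually hxa |>.exists.elim fun m hm => hm.1 hm.2

lemma splitPt_apply_ne {x y : ℕ → Bool} (h : x ≠ y) : x (splitPt x y) ≠ y (splitPt x y) :=
  Nat.sInf_mem (Function.ne_iff.1 h)

lemma le_splitPt_of_eqOn_lt {x y : ℕ → Bool} {N : ℕ} (hxy : x ≠ y)
    (hlt : ∀ m < N, x m = y m) : N ≤ splitPt x y :=
  not_lt.1 fun h => splitPt_apply_ne hxy (hlt _ h)

lemma splitPt_eq_of_eqOn_lt {x y : ℕ → Bool} {k : ℕ} (hk : x k ≠ y k)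
    (hlt : ∀ m < k, x m = y m) : splitPt x y = k :=
  le_antisymm (Nat.sInf_le hk) (le_splitPt_of_eqOn_lt (Function.ne_iff.2 ⟨k, hk⟩) hlt)

theorem mem_raisonnier_of_finite_compl (X : Set (ℕ → Bool)) {a : Set ℕ} (ha : aᶜ.Finite) :
    a ∈ raisonnier X := by
  obtain ⟨N, hN⟩ : ∃ N, ∀ k, N ≤ k → k ∈ a := by
    obtain ⟨B, hB⟩ := ha.bddAbove
    exact ⟨B + 1, fun k hk => by_contra fun hka => absurd (hB hka) (by omega)⟩
  obtain ⟨f, hf⟩ := exists_surjective_nat (Fin N → Bool)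
  let prefixOf (x : ℕ → Bool) (m : Fin N) : Bool := x m
  refine ⟨fun n => prefixOf ⁻¹' {f n}, fun x _ => mem_iUnion.2 ?_, ?_⟩
  · obtain ⟨n, hn⟩ := hf (prefixOf x)
    exact ⟨n, hn.symm⟩
  · rintro _ ⟨_, ⟨n, rfl⟩, x, hx, y, hy, hxy, rfl⟩
    refine hN _ (le_splitPt_of_eqOn_lt hxy fun m hm => ?_)
    exact congrFun ((hx : prefixOf x = f n).trans hy.symm) ⟨m, hm⟩

theorem exists_forall_eq_of_eqOn_lt {α : Type*} [Nonempty α] (F : ℕ → (ℕ → α) → α)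
    (hF : ∀ k x y, (∀ m < k, x m = y m) → F k x = F k y) : ∃ x : ℕ → α, ∀ k, x k = F k x := by
  inhabit α
  let x : ℕ → α := Nat.strongRec fun k g => F k fun m => if h : m < k then g m h else default
  refine ⟨x, fun k => (Nat.strongRec_eq _ k).trans (hF k _ _ fun m hm => ?_)⟩
  simp [hm, x]

theorem exists_notMem_iUnion_of_notMem_splitPts {Y : ℕ → Set (ℕ → Bool)} {e : ℕ → ℕ}
    (he : e.Injective) (hY : ∀ n, e n ∉ splitPts (Y n)) :
    ∃ x : ℕ → Bool, (∀ k, x k = true → k ∈ range e) ∧ x ∉ ⋃ n, Y n := by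
  classical
  obtain ⟨x, hx⟩ := exists_forall_eq_of_eqOn_lt
    (fun k x => decide (∃ n, e n = k ∧ ∃ y ∈ Y n, (∀ m < k, y m = x m) ∧ y k = false))
    fun k x z hxz => by simp +contextual [hxz]
  refine ⟨x, fun k hk => ?_, fun hmem => ?_⟩
  · rw [hx, decide_eq_true_iff] at hk
    obtain ⟨n, rfl, -⟩ := hk
    exact mem_range_self n
  obtain ⟨n, hn⟩ := mem_iUnion.1 hmem
  cases hxk : x (e n) with
  | false =>
    rw [hx, decide_eq_false_iff_not] at hxk
    exact hxk ⟨n, rfl, x, hn, fun _ _ => rfl, by rwa [hx, decide_eq_false_iff_not]⟩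
  | true =>
    have hxt := hxk
    rw [hx, decide_eq_true_iff] at hxk
    obtain ⟨n', hn', y, hy, hyx, hyk⟩ := hxk
    rw [he hn'] at hy
    have hne : x (e n) ≠ y (e n) := by simp [hxt, hyk]
    exact hY n ⟨x, hn, y, hy, Function.ne_iff.2 ⟨_, hne⟩,
      splitPt_eq_of_eqOn_lt hne fun m hm => (hyx m hm).symm⟩

theorem finite_diff_of_mem_raisonnier {X : Set (ℕ → Bool)} {s a : Set ℕ}
    (hs : {x : ℕ → Bool | ∀ k, x k = true → k ∈ s} ⊆ X) (ha : a ∈ raisonnier X) :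
    (s \ a).Finite := by
  obtain ⟨Y, hXY, hYa⟩ := ha
  by_contra hinf
  let e : ℕ → ℕ := fun n => Set.Infinite.natEmbedding _ hinf n
  have he : e.Injective := Subtype.val_injective.comp (Set.Infinite.natEmbedding _ hinf).injective
  have hes : ∀ n, e n ∈ s \ a := fun n => (Set.Infinite.natEmbedding _ hinf n).2
  obtain ⟨x, hxe, hxY⟩ := exists_notMem_iUnion_of_notMem_splitPts he
    fun n hn => (hes n).2 (hYa (mem_iUnion_of_mem n hn))
  refine hxY (hXY (hs fun k hk => ?_))
  obtain ⟨n, rfl⟩ := hxe k hk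
  exact (hes n).1

theorem stmt8 :
    interior ({x : ℕ → Bool | ∀ n, x n = true → Even n} ∪
        {x : ℕ → Bool | ∀ n, x n = true → Odd n}) = ∅ ∧
    raisonnier ({x : ℕ → Bool | ∀ n, x n = true → Even n} ∪
        {x : ℕ → Bool | ∀ n, x n = true → Odd n}) = {a : Set ℕ | aᶜ.Finite} := by
  refine ⟨interior_eq_empty_of_forall_frequently_ne true ?_, ?_⟩
  · rintro x (hx | hx)
    · exact Nat.frequently_odd.mono fun m hm hxm => Nat.not_even_iff_odd.2 hm (hx m hxm)
    · exact Nat.frequently_even.mono fun m hm hxm => Nat.not_odd_iff_even.2 hm (hx m hxm)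
  ext a
  refine ⟨fun ha => ?_, mem_raisonnier_of_finite_compl _⟩
  refine ((finite_diff_of_mem_raisonnier subset_union_left ha).union
    (finite_diff_of_mem_raisonnier subset_union_right ha)).subset fun n hn => ?_
  rcases Nat.even_or_odd n with h | h
  exacts [Or.inl ⟨h, hn⟩, Or.inr ⟨h, hn⟩]
end

section
/- The following are equivalent for every X ⊆ 2^ω: (1) the Raisonnier filter F_X is rapid; (2) for every partitioning real d, X goes through some d-binary slalom; (3) for every partitioning real d, the set nat_d[X] = { nat_d(x) : x ∈ X } ⊆ ℕ→ℕ goes through some slalom. -/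
open Filter Set

/-- A family `F` of subsets of ℕ is rapid if for every strictly increasing `f : ℕ → ℕ`
there is `a ∈ F` with `|a ∩ [0, f n)| ≤ n` for all `n`. (The trivial filter `𝒫(ℕ)`
trivially satisfies this.) -/
def IsRapid (F : Set (Set ℕ)) : Prop :=
  ∀ f : ℕ → ℕ, StrictMono f → ∃ a ∈ F, ∀ n, (a ∩ Set.Iio (f n)).ncard ≤ n

/-- `d` is a partitioning real: strictly increasing with `d 0 = 0`.
The associated intervals are `I^d_n = [d n, d (n+1))`. -/
def IsPartitioning (d : ℕ → ℕ) : Prop := StrictMono d ∧ d 0 = 0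

/-- The restriction of `x ∈ 2^ω` to the interval `I^d_n = [d n, d (n+1))`,
as a binary string of length `|I^d_n|`. -/
def restrictI (d : ℕ → ℕ) (x : ℕ → Bool) (n : ℕ) : List Bool :=
  (List.range (d (n + 1) - d n)).map fun i => x (d n + i)

/-- `B` is a `d`-binary slalom: `|B n| ≤ n` and `B n ⊆ {0,1}^{|I^d_n|}` for all `n`. -/
def IsBinarySlalom (d : ℕ → ℕ) (B : ℕ → Finset (List Bool)) : Prop :=
  (∀ n, (B n).card ≤ n) ∧ ∀ n, ∀ s ∈ B n, s.length = d (n + 1) - d n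

/-- `X ⊆ 2^ω` goes through the `d`-binary slalom `B`: every `x ∈ X` satisfies
`x ↾ I^d_n ∈ B n` for all but finitely many `n`. -/
def GoesThroughBin (d : ℕ → ℕ) (X : Set (ℕ → Bool)) (B : ℕ → Finset (List Bool)) : Prop :=
  ∀ x ∈ X, ∀ᶠ n in atTop, restrictI d x n ∈ B n

/-- The natural number represented by a finite binary string (most significant digit first). -/
def natOf (s : List Bool) : ℕ := s.foldl (fun a b => 2 * a + (if b then 1 else 0)) 0

/-- `nat_d : 2^ω → ω^ω`, reading off the binary values of `x` on the intervals `I^d_n`. -/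
def natD (d : ℕ → ℕ) (x : ℕ → Bool) : ℕ → ℕ := fun n => natOf (restrictI d x n)

/-- `S` is a slalom: `|S n| ≤ n` for all `n`. -/
def IsSlalom (S : ℕ → Finset ℕ) : Prop := ∀ n, (S n).card ≤ n

/-- A set of reals `F ⊆ ω^ω` goes through the slalom `S` if every member does. -/
def GoesThrough (F : Set (ℕ → ℕ)) (S : ℕ → Finset ℕ) : Prop :=
  ∀ f ∈ F, ∀ᶠ n in atTop, f n ∈ S n

/-!
Two reals of one piece `Y k` of a witness for `a ∈ F_X` that agree on `a ∩ [0, N)` agree on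
`[0, N)`, since their splitting point lies in `a`. So if `a` is rapid, each piece leaves at
most `2 ^ |a ∩ [0, d (m + 1))| ≤ √m` traces on `I^d_m`, and the traces of the first `√m` pieces
form a `d`-binary slalom. Conversely, the reals going through a binary slalom `B` from stage
`n₀` on with a fixed prefix split only at first differences of two strings of some `B m`:
at most `m ^ 2` points of `I^d_m`. Choosing `d` to grow fast relative to `f` makes the set of
these points witness rapidity for `f`. Binary strings of a fixed length are determined by
the numbers they represent, which gives the form with slaloms.
-/

lemma apply_splitPt_ne {x y : ℕ → Bool} (hxy : x ≠ y) : x (splitPt x y) ≠ y (splitPt x y) :=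
  Nat.sInf_mem (s := {n | x n ≠ y n}) (Function.ne_iff.mp hxy)

lemma eq_of_lt_splitPt {x y : ℕ → Bool} {j : ℕ} (hj : j < splitPt x y) : x j = y j := by
  simpa using Nat.notMem_of_lt_sInf (s := {n | x n ≠ y n}) hj

lemma eq_of_forall_mem_eq_of_splitPts_subset {Y : Set (ℕ → Bool)} {a : Set ℕ}
    (hY : splitPts Y ⊆ a) {x y : ℕ → Bool} (hx : x ∈ Y) (hy : y ∈ Y) {N : ℕ}
    (hxy : ∀ j ∈ a, j < N → x j = y j) {j : ℕ} (hj : j < N) : x j = y j := by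
  by_cases heq : x = y
  · rw [heq]
  refine eq_of_lt_splitPt (lt_of_lt_of_le hj (not_lt.mp fun hlt => apply_splitPt_ne heq ?_))
  exact hxy _ (hY ⟨x, hx, y, hy, heq, rfl⟩) hlt

lemma finite_image_and_ncard_image_le {β : Type*} {Y : Set (ℕ → Bool)} {a : Set ℕ}
    (hY : splitPts Y ⊆ a) {N : ℕ} (r : (ℕ → Bool) → β)
    (hr : ∀ x y, (∀ j < N, x j = y j) → r x = r y) :
    (r '' Y).Finite ∧ (r '' Y).ncard ≤ 2 ^ (a ∩ Iio N).ncard := by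
  classical
  have ha : (a ∩ Iio N).Finite := (finite_Iio N).subset inter_subset_right
  let trace : (ℕ → Bool) → Finset ℕ := fun x => Finset.filter (fun j => x j = true) ha.toFinset
  let φ : β → Finset ℕ := fun s => trace (Function.invFunOn r Y s)
  have hmaps : MapsTo φ (r '' Y) ↑ha.toFinset.powerset := fun _ _ =>
    Finset.mem_coe.mpr (Finset.mem_powerset.mpr (Finset.filter_subset _ _))
  have hinj : InjOn φ (r '' Y) := by
    rintro _ ⟨x, hx, rfl⟩ _ ⟨y, hy, rfl⟩ hφ
    have hx' := Function.invFunOn_pos (b := r x) ⟨x, hx, rfl⟩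
    have hy' := Function.invFunOn_pos (b := r y) ⟨y, hy, rfl⟩
    rw [← hx'.2, ← hy'.2]
    refine hr _ _ fun j hj => eq_of_forall_mem_eq_of_splitPts_subset hY hx'.1 hy'.1
      (fun i hia hiN => ?_) hj
    have := congrArg (i ∈ ·) hφ
    simp only [φ, trace, Finset.mem_filter, Set.Finite.mem_toFinset] at this
    simpa [hia, hiN] using this
  refine ⟨Finite.of_injOn hmaps hinj (Finset.finite_toSet _), ?_⟩
  calc (r '' Y).ncard ≤ (↑ha.toFinset.powerset : Set (Finset ℕ)).ncard :=
        ncard_le_ncard_of_injOn φ hmaps hinj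
    _ = 2 ^ (a ∩ Iio N).ncard := by
        rw [ncard_coe_finset, Finset.card_powerset, ncard_eq_toFinset_card _ ha]

lemma restrictI_length (d : ℕ → ℕ) (x : ℕ → Bool) (n : ℕ) :
    (restrictI d x n).length = d (n + 1) - d n := by simp [restrictI]

lemma restrictI_getElem? (d : ℕ → ℕ) (x : ℕ → Bool) {n i : ℕ} (hi : i < d (n + 1) - d n) :
    (restrictI d x n)[i]? = some (x (d n + i)) := by
  simp [restrictI, List.getElem?_range hi]

lemma restrictI_congr {d : ℕ → ℕ} {x y : ℕ → Bool} {n : ℕ}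
    (h : ∀ j < d (n + 1), x j = y j) : restrictI d x n = restrictI d y n :=
  List.map_congr_left fun i hi => h _ (by simp only [List.mem_range] at hi; omega)

lemma sqrt_mul_two_pow_log_le (m : ℕ) : Nat.sqrt m * 2 ^ Nat.log 4 m ≤ m := by
  rcases Nat.eq_zero_or_pos m with rfl | hm
  · simp
  have hpow : 2 ^ Nat.log 4 m ≤ Nat.sqrt m := Nat.le_sqrt.mpr <| by
    rw [← mul_pow]
    exact Nat.pow_log_le_self 4 hm.ne'
  exact (Nat.mul_le_mul_left _ hpow).trans (Nat.sqrt_le m)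

theorem exists_binarySlalom_of_isRapid {X : Set (ℕ → Bool)} (hR : IsRapid (raisonnier X))
    {d : ℕ → ℕ} (hd : StrictMono d) :
    ∃ B : ℕ → Finset (List Bool), IsBinarySlalom d B ∧ GoesThroughBin d X B := by
  classical
  obtain ⟨a, ⟨Y, hcov, hspl⟩, ha⟩ :=
    hR (fun n => d (4 ^ (n + 1)))
      (hd.comp fun _ _ h => Nat.pow_lt_pow_right (by norm_num) (by omega))
  have htraces (k m : ℕ) := finite_image_and_ncard_image_le
    ((subset_iUnion _ k).trans hspl) (fun x => restrictI d x m) fun _ _ => restrictI_congr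
  have hlog (m : ℕ) : (a ∩ Iio (d (m + 1))).ncard ≤ Nat.log 4 m := by
    refine (ncard_le_ncard (inter_subset_inter_right _ (Iio_subset_Iio (hd.monotone ?_)))
      ((finite_Iio _).subset inter_subset_right)).trans (ha (Nat.log 4 m))
    exact Nat.lt_pow_succ_log_self (by norm_num) m
  refine ⟨fun m => (Finset.range (Nat.sqrt m)).biUnion fun k => (htraces k m).1.toFinset,
    ⟨fun m => ?_, fun m s hs => ?_⟩, fun x hx => ?_⟩
  · refine (Finset.card_biUnion_le_card_mul _ _ (2 ^ Nat.log 4 m) fun k _ => ?_).trans ?_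
    · rw [← ncard_eq_toFinset_card _ (htraces k m).1]
      exact (htraces k m).2.trans (Nat.pow_le_pow_right (by norm_num) (hlog m))
    · simpa using sqrt_mul_two_pow_log_le m
  · obtain ⟨k, -, hks⟩ := Finset.mem_biUnion.mp hs
    obtain ⟨x, -, rfl⟩ := (Set.Finite.mem_toFinset _).mp hks
    exact restrictI_length d x m
  · obtain ⟨k, hk⟩ := mem_iUnion.mp (hcov hx)
    refine eventually_atTop.mpr ⟨(k + 1) * (k + 1), fun m hm => Finset.mem_biUnion.mpr
      ⟨k, Finset.mem_range.mpr (Nat.le_sqrt.mpr hm), (Set.Finite.mem_toFinset _).mpr ⟨x, hk, rfl⟩⟩⟩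

/-- Junk value `0` on equal strings. -/
noncomputable def firstDiff (s t : List Bool) : ℕ := sInf {i | s[i]? ≠ t[i]?}

lemma add_firstDiff_restrictI {d : ℕ → ℕ} {x y : ℕ → Bool} {m h : ℕ}
    (hlt : ∀ j < h, x j = y j) (hne : x h ≠ y h) (hdh : d m ≤ h) (hhd : h < d (m + 1)) :
    d m + firstDiff (restrictI d x m) (restrictI d y m) = h := by
  suffices firstDiff (restrictI d x m) (restrictI d y m) = h - d m by omega
  have hmem : (restrictI d x m)[h - d m]? ≠ (restrictI d y m)[h - d m]? := by
    rw [restrictI_getElem? d x (by omega), restrictI_getElem? d y (by omega),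
      Nat.add_sub_cancel' hdh]
    exact fun heq => hne (Option.some.inj heq)
  refine le_antisymm (Nat.sInf_le hmem) (le_csInf ⟨_, hmem⟩ fun i hi => not_lt.mp fun hih => hi ?_)
  rw [restrictI_getElem? d x (by omega), restrictI_getElem? d y (by omega), hlt _ (by omega)]

/-- The splitting points that reals going through `B` can have in `I^d_m`. -/
noncomputable def slalomSplitPts (d : ℕ → ℕ) (B : ℕ → Finset (List Bool)) (m : ℕ) : Finset ℕ :=
  (B m ×ˢ B m).image fun p => d m + firstDiff p.1 p.2

lemma card_slalomSplitPts_le {d : ℕ → ℕ} {B : ℕ → Finset (List Bool)} (hB : ∀ n, (B n).card ≤ n)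
    (m : ℕ) : (slalomSplitPts d B m).card ≤ m ^ 2 :=
  Finset.card_image_le.trans <| by
    rw [Finset.card_product, sq]
    exact Nat.mul_le_mul (hB m) (hB m)

lemma le_of_mem_slalomSplitPts {d : ℕ → ℕ} {B : ℕ → Finset (List Bool)} {m h : ℕ}
    (hh : h ∈ slalomSplitPts d B m) : d m ≤ h := by
  obtain ⟨p, -, rfl⟩ := Finset.mem_image.mp hh
  exact Nat.le_add_right _ _

def throughFrom (d : ℕ → ℕ) (B : ℕ → Finset (List Bool)) (n₀ : ℕ) (σ : List Bool) :
    Set (ℕ → Bool) :=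
  {x | (List.range (d n₀)).map x = σ ∧ ∀ m ≥ n₀, restrictI d x m ∈ B m}

lemma exists_mem_Ico_of_le {d : ℕ → ℕ} (hd : StrictMono d) {n₀ h : ℕ} (hh : d n₀ ≤ h) :
    ∃ m, n₀ ≤ m ∧ d m ≤ h ∧ h < d (m + 1) := by
  classical
  have hex : ∃ k, h < d k := ⟨h + 1, Nat.lt_of_lt_of_le (Nat.lt_succ_self h) hd.le_apply⟩
  obtain ⟨m, hm⟩ : ∃ m, Nat.find hex = m + 1 :=
    Nat.exists_eq_add_one_of_ne_zero fun h0 => absurd (h0 ▸ Nat.find_spec hex) <|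
      not_lt.mpr ((hd.monotone (Nat.zero_le n₀)).trans hh)
  have hlt : h < d (m + 1) := hm ▸ Nat.find_spec hex
  exact ⟨m, Nat.lt_succ_iff.mp (hd.lt_iff_lt.mp (hh.trans_lt hlt)),
    not_lt.mp (Nat.find_min hex (by omega)), hlt⟩

lemma splitPts_throughFrom_subset {d : ℕ → ℕ} (hd : StrictMono d) (B : ℕ → Finset (List Bool))
    (n₀ : ℕ) (σ : List Bool) :
    splitPts (throughFrom d B n₀ σ) ⊆ ⋃ m, ↑(slalomSplitPts d B m) := by
  rintro _ ⟨x, ⟨hxσ, hxB⟩, y, ⟨hyσ, hyB⟩, hxy, rfl⟩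
  have hne := apply_splitPt_ne hxy
  have hpre : ∀ j ∈ List.range (d n₀), x j = y j := List.map_inj_left.mp (hxσ.trans hyσ.symm)
  have hge : d n₀ ≤ splitPt x y :=
    not_lt.mp fun hlt => hne (hpre _ (List.mem_range.mpr hlt))
  obtain ⟨m, hn₀m, hdm, hlt⟩ := exists_mem_Ico_of_le hd hge
  refine mem_iUnion.mpr ⟨m, Finset.mem_image.mpr ⟨(restrictI d x m, restrictI d y m),
    Finset.mem_product.mpr ⟨hxB m hn₀m, hyB m hn₀m⟩, ?_⟩⟩
  exact add_firstDiff_restrictI (fun _ => eq_of_lt_splitPt) hne hdm hlt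

lemma mem_raisonnier_of_countable {ι : Type*} [Countable ι] {X : Set (ℕ → Bool)} {a : Set ℕ}
    (Y : ι → Set (ℕ → Bool)) (hX : X ⊆ ⋃ i, Y i) (ha : ∀ i, splitPts (Y i) ⊆ a) :
    a ∈ raisonnier X := by
  obtain ⟨e, he⟩ := Countable.exists_injective_nat ι
  refine ⟨fun n => ⋃ (i) (_ : e i = n), Y i, fun x hx => ?_, ?_⟩
  · obtain ⟨i, hi⟩ := mem_iUnion.mp (hX hx)
    exact mem_iUnion.mpr ⟨e i, mem_iUnion₂.mpr ⟨i, rfl, hi⟩⟩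
  · intro _ hh
    obtain ⟨n, x, hx, y, hy, hxy, rfl⟩ := mem_iUnion.mp hh
    obtain ⟨i, rfl, hxi⟩ := mem_iUnion₂.mp hx
    obtain ⟨j, hj, hyj⟩ := mem_iUnion₂.mp hy
    rw [he hj] at hyj
    exact ha i ⟨x, hxi, y, hyj, hxy, rfl⟩

lemma iUnion_slalomSplitPts_mem_raisonnier {d : ℕ → ℕ} (hd : StrictMono d) {X : Set (ℕ → Bool)}
    {B : ℕ → Finset (List Bool)} (hB : GoesThroughBin d X B) :
    ⋃ m, ↑(slalomSplitPts d B m) ∈ raisonnier X := by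
  refine mem_raisonnier_of_countable (fun i : ℕ × List Bool => throughFrom d B i.1 i.2)
    (fun x hx => ?_) fun i => splitPts_throughFrom_subset hd B i.1 i.2
  obtain ⟨n₀, hn₀⟩ := eventually_atTop.mp (hB x hx)
  exact mem_iUnion.mpr ⟨(n₀, (List.range (d n₀)).map x), rfl, hn₀⟩

lemma ncard_iUnion_inter_Iio_le {d : ℕ → ℕ} (hd : StrictMono d) (E : ℕ → Finset ℕ)
    (hE : ∀ m, ∀ h ∈ E m, d m ≤ h) (M : ℕ) :
    ((⋃ m, (E m : Set ℕ)) ∩ Iio (d M)).ncard ≤ ∑ m ∈ Finset.range M, (E m).card := by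
  classical
  have hsub : (⋃ m, (E m : Set ℕ)) ∩ Iio (d M) ⊆ ↑((Finset.range M).biUnion E) := by
    rintro h ⟨hh, hlt⟩
    obtain ⟨m, hm⟩ := mem_iUnion.mp hh
    have : d m < d M := (hE m h hm).trans_lt hlt
    exact Finset.mem_biUnion.mpr ⟨m, Finset.mem_range.mpr (hd.lt_iff_lt.mp this), hm⟩
  exact (ncard_le_ncard hsub (Finset.finite_toSet _)).trans
    ((ncard_coe_finset _).trans_le Finset.card_biUnion_le)

lemma exists_isPartitioning_le (g : ℕ → ℕ) : ∃ d, IsPartitioning d ∧ ∀ k, g k ≤ d (k + 1) := by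
  refine ⟨fun m => m + ∑ i ∈ Finset.range m, g i, ⟨strictMono_nat_of_lt_succ fun m => ?_, by simp⟩,
    fun k => ?_⟩
  all_goals simp only [Finset.sum_range_succ]
  all_goals omega

lemma ncard_inter_Iio_le_of_le_partition {a : Set ℕ} {d f T : ℕ → ℕ} (hd : StrictMono d)
    (hf : StrictMono f) (hT : T 0 = 0) (hfd : ∀ k, f (T (k + 1)) ≤ d (k + 1))
    (ha : ∀ M, (a ∩ Iio (d (M + 1))).ncard ≤ T M) (n : ℕ) : (a ∩ Iio (f n)).ncard ≤ n := by
  classical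
  have hex : ∃ K, f n ≤ d (K + 1) := ⟨f n, hd.le_apply.trans (hd.monotone (Nat.le_succ _))⟩
  refine (ncard_le_ncard (inter_subset_inter_right _ (Iio_subset_Iio (Nat.find_spec hex)))
    ((finite_Iio _).subset inter_subset_right)).trans ((ha _).trans ?_)
  rcases hK : Nat.find hex with _ | k
  · simp [hT]
  · have hmin : d (k + 1) < f n := not_le.mp (Nat.find_min hex (by omega))
    exact (hf.lt_iff_lt.mp ((hfd k).trans_lt hmin)).le

theorem isRapid_raisonnier_of_forall_exists_binarySlalom {X : Set (ℕ → Bool)}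
    (hX : ∀ d : ℕ → ℕ, IsPartitioning d →
      ∃ B : ℕ → Finset (List Bool), IsBinarySlalom d B ∧ GoesThroughBin d X B) :
    IsRapid (raisonnier X) := by
  intro f hf
  let T : ℕ → ℕ := fun M => ∑ m ∈ Finset.range (M + 1), m ^ 2
  obtain ⟨d, hd, hfd⟩ := exists_isPartitioning_le fun k => f (T (k + 1))
  obtain ⟨B, ⟨hBcard, -⟩, hBX⟩ := hX d hd
  refine ⟨_, iUnion_slalomSplitPts_mem_raisonnier hd.1 hBX,
    ncard_inter_Iio_le_of_le_partition hd.1 hf (by simp [T]) hfd fun M => ?_⟩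
  exact (ncard_iUnion_inter_Iio_le hd.1 _ (fun _ _ => le_of_mem_slalomSplitPts) (M + 1)).trans
    (Finset.sum_le_sum fun m _ => card_slalomSplitPts_le hBcard m)

def binaryString : ℕ → ℕ → List Bool
  | 0, _ => []
  | L + 1, k => binaryString L (k / 2) ++ [decide (k % 2 = 1)]

lemma length_binaryString (L k : ℕ) : (binaryString L k).length = L := by
  induction L generalizing k with
  | zero => rfl
  | succ L ih => simp [binaryString, ih]

lemma natOf_append_singleton (s : List Bool) (b : Bool) :
    natOf (s ++ [b]) = 2 * natOf s + (if b then 1 else 0) := by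
  simp [natOf, List.foldl_append]

lemma binaryString_length_natOf (s : List Bool) : binaryString s.length (natOf s) = s := by
  induction s using List.reverseRecOn with
  | nil => rfl
  | append_singleton t b ih =>
    rw [natOf_append_singleton, List.length_append, List.length_singleton, binaryString]
    cases b <;> simp [Nat.mul_add_div, ih]

theorem exists_binarySlalom_iff_exists_slalom (X : Set (ℕ → Bool)) (d : ℕ → ℕ) :
    (∃ B : ℕ → Finset (List Bool), IsBinarySlalom d B ∧ GoesThroughBin d X B) ↔
    ∃ S : ℕ → Finset ℕ, IsSlalom S ∧ GoesThrough (natD d '' X) S := by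
  constructor
  · rintro ⟨B, ⟨hcard, -⟩, hBX⟩
    refine ⟨fun n => (B n).image natOf, fun n => Finset.card_image_le.trans (hcard n), ?_⟩
    rintro _ ⟨x, hx, rfl⟩
    filter_upwards [hBX x hx] with n hn using Finset.mem_image_of_mem _ hn
  · rintro ⟨S, hS, hSX⟩
    refine ⟨fun n => (S n).image (binaryString (d (n + 1) - d n)),
      ⟨fun n => Finset.card_image_le.trans (hS n), fun n s hs => ?_⟩, fun x hx => ?_⟩
    · obtain ⟨k, -, rfl⟩ := Finset.mem_image.mp hs
      exact length_binaryString _ _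
    · filter_upwards [hSX _ ⟨x, hx, rfl⟩] with n hn
      rw [← binaryString_length_natOf (restrictI d x n), restrictI_length]
      exact Finset.mem_image_of_mem _ hn

theorem stmt14 (X : Set (ℕ → Bool)) :
    (IsRapid (raisonnier X) ↔
      ∀ d : ℕ → ℕ, IsPartitioning d →
        ∃ B : ℕ → Finset (List Bool), IsBinarySlalom d B ∧ GoesThroughBin d X B) ∧
    (IsRapid (raisonnier X) ↔
      ∀ d : ℕ → ℕ, IsPartitioning d →
        ∃ S : ℕ → Finset ℕ, IsSlalom S ∧ GoesThrough (natD d '' X) S) := by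
  have hbin : IsRapid (raisonnier X) ↔ ∀ d : ℕ → ℕ, IsPartitioning d →
      ∃ B : ℕ → Finset (List Bool), IsBinarySlalom d B ∧ GoesThroughBin d X B :=
    ⟨fun hR _ hd => exists_binarySlalom_of_isRapid hR hd.1,
      isRapid_raisonnier_of_forall_exists_binarySlalom⟩
  exact ⟨hbin, hbin.trans (forall₂_congr fun d _ => exists_binarySlalom_iff_exists_slalom X d)⟩
end
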